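/- arXiv:2106.12369 — 5 statements merged into one kernel-verified Lean document; each statement's English description precedes it below -/
import Mathlib

section
/- Let −1 < p < 0 and x, y ∈ ℝ^d (with the convention that |z|^p z = 0 at z = 0 extended by continuity or the inequality interpreted for x, y where defined). Then the segment average satisfies ∫₀¹ |τx + (1−τ)y|^p dτ ≤ (2/(p+1)) |x − y|^p, whenever x ≠ y. -/
/-!
Write the segment as `τ ↦ y + τ • v` with `v = x - y`. Cauchy–Schwarz against `v` gives
`‖y + τ • v‖ ≥ ‖v‖ * |τ - c|`, where `c` parametrises the point of the line closest to the origin,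
so for `p ≤ 0` the integral is at most `‖v‖ ^ p * ∫₀¹ |τ - c| ^ p`. Clamping `c` to `[0, 1]` only
increases this scalar integral, and for `c ∈ [0, 1]` it equals
`(c ^ (p + 1) + (1 - c) ^ (p + 1)) / (p + 1) ≤ 2 / (p + 1)`.
-/

open MeasureTheory intervalIntegral Real Set

section AbsSubRpow

variable {p : ℝ}

lemma intervalIntegrable_abs_sub_rpow (hp : -1 < p) (c a b : ℝ) :
    IntervalIntegrable (fun τ => |τ - c| ^ p) volume a b := by
  have h₁ := (intervalIntegrable_rpow' (a := a - c) (b := b - c) hp).comp_sub_right c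
  have h₂ := (intervalIntegrable_rpow' (a := c - a) (b := c - b) hp).comp_sub_left c
  simp only [sub_sub_cancel, sub_add_cancel] at h₁ h₂
  refine (h₁.norm.add h₂.norm).mono_fun' (by fun_prop : Measurable _).aestronglyMeasurable
    (ae_of_all _ fun τ => ?_)
  dsimp only
  rw [Real.norm_of_nonneg (by positivity)]
  rcases le_total c τ with h | h
  · rw [abs_of_nonneg (sub_nonneg.2 h)]
    exact le_add_of_le_of_nonneg (Real.le_norm_self _) (norm_nonneg _)
  · rw [abs_of_nonpos (sub_nonpos.2 h), neg_sub]
    exact le_add_of_nonneg_of_le (norm_nonneg _) (Real.le_norm_self _)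

lemma integral_abs_sub_rpow_of_mem_Icc (hp : -1 < p) {a b c : ℝ} (hc : c ∈ Icc a b) :
    ∫ τ in a..b, |τ - c| ^ p = ((c - a) ^ (p + 1) + (b - c) ^ (p + 1)) / (p + 1) := by
  have hp' : p + 1 ≠ 0 := by linarith
  have left : ∫ τ in a..c, |τ - c| ^ p = ∫ τ in a..c, (c - τ) ^ p := by
    refine integral_congr fun τ hτ => ?_
    rw [uIcc_of_le hc.1] at hτ
    rw [abs_sub_comm, abs_of_nonneg (sub_nonneg.2 hτ.2)]
  have right : ∫ τ in c..b, |τ - c| ^ p = ∫ τ in c..b, (τ - c) ^ p := by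
    refine integral_congr fun τ hτ => ?_
    rw [uIcc_of_le hc.2] at hτ
    rw [abs_of_nonneg (sub_nonneg.2 hτ.1)]
  rw [← integral_add_adjacent_intervals (intervalIntegrable_abs_sub_rpow hp c a c)
    (intervalIntegrable_abs_sub_rpow hp c c b), left, right,
    integral_comp_sub_left (fun s => s ^ p), integral_comp_sub_right (fun s => s ^ p),
    sub_self, integral_rpow (Or.inl hp), integral_rpow (Or.inl hp), zero_rpow hp', add_div]
  simp

lemma integral_unitInterval_abs_sub_rpow_le (hp : -1 < p) (hp0 : p ≤ 0) (c : ℝ) :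
    ∫ τ in (0 : ℝ)..1, |τ - c| ^ p ≤ 2 / (p + 1) := by
  have hp' : 0 < p + 1 := by linarith
  set c' : ℝ := ↑(projIcc (0 : ℝ) 1 zero_le_one c)
  have hc' : c' ∈ Icc (0 : ℝ) 1 := (projIcc _ _ _ c).2
  have hclamp : ∀ τ ∈ Icc (0 : ℝ) 1, τ ≠ c' → |τ - c| ^ p ≤ |τ - c'| ^ p := by
    intro τ hτ hτc
    have hdist : |τ - c'| ≤ |τ - c| := by
      simpa [c', projIcc_of_mem _ hτ] using abs_projIcc_sub_projIcc zero_le_one (c := τ) (d := c)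
    exact rpow_le_rpow_of_nonpos (abs_pos.2 (sub_ne_zero.2 hτc)) hdist hp0
  have hmono : (fun τ => |τ - c| ^ p) ≤ᵐ[volume.restrict (Icc 0 1)] fun τ => |τ - c'| ^ p := by
    filter_upwards [ae_restrict_mem measurableSet_Icc, ae_restrict_of_ae (Measure.ae_ne volume c')]
      using hclamp
  calc ∫ τ in (0 : ℝ)..1, |τ - c| ^ p
      ≤ ∫ τ in (0 : ℝ)..1, |τ - c'| ^ p :=
        integral_mono_ae_restrict zero_le_one (intervalIntegrable_abs_sub_rpow hp c 0 1)
          (intervalIntegrable_abs_sub_rpow hp c' 0 1) hmono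
    _ = ((c' - 0) ^ (p + 1) + (1 - c') ^ (p + 1)) / (p + 1) :=
        integral_abs_sub_rpow_of_mem_Icc hp hc'
    _ ≤ (1 + 1) / (p + 1) := by
        gcongr <;>
          exact rpow_le_one (by linarith [hc'.1, hc'.2]) (by linarith [hc'.1, hc'.2]) hp'.le
    _ = 2 / (p + 1) := by norm_num

end AbsSubRpow

section InnerProductSpace

variable {E : Type*} [NormedAddCommGroup E] [InnerProductSpace ℝ E]

lemma exists_mul_abs_sub_le_norm_add_smul (y v : E) :
    ∃ c : ℝ, ∀ τ : ℝ, ‖v‖ * |τ - c| ≤ ‖y + τ • v‖ := by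
  rcases eq_or_ne v 0 with rfl | hv
  · exact ⟨0, fun τ => by simp⟩
  have hv2 : 0 < ‖v‖ ^ 2 := by positivity
  -- `c` is the parameter of the orthogonal projection of `0` onto the line `τ ↦ y + τ • v`
  set c := -inner ℝ y v / ‖v‖ ^ 2 with hc
  refine ⟨c, fun τ => ?_⟩
  have hinner : inner ℝ (y + τ • v) v = (τ - c) * ‖v‖ ^ 2 := by
    rw [inner_add_left, real_inner_smul_left, real_inner_self_eq_norm_sq, hc]
    field_simp
    ring
  have hCS := abs_real_inner_le_norm (y + τ • v) v
  rw [hinner, abs_mul, abs_of_pos hv2, sq, ← mul_assoc] at hCS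
  exact le_of_mul_le_mul_right (by linarith) (norm_pos_iff.2 hv)

lemma integral_norm_add_smul_rpow_le {p : ℝ} (hp : -1 < p) (hp0 : p ≤ 0) (y : E) {v : E}
    (hv : v ≠ 0) : ∫ τ in (0 : ℝ)..1, ‖y + τ • v‖ ^ p ≤ 2 / (p + 1) * ‖v‖ ^ p := by
  obtain ⟨c, hc⟩ := exists_mul_abs_sub_le_norm_add_smul y v
  have hbound : ∀ τ, τ ≠ c → ‖y + τ • v‖ ^ p ≤ ‖v‖ ^ p * |τ - c| ^ p := fun τ hτ => by
    rw [← mul_rpow (norm_nonneg v) (abs_nonneg _)]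
    exact rpow_le_rpow_of_nonpos (by positivity [abs_pos.2 (sub_ne_zero.2 hτ)]) (hc τ) hp0
  have hmajorant := (intervalIntegrable_abs_sub_rpow hp c 0 1).const_mul (‖v‖ ^ p)
  have hint : IntervalIntegrable (fun τ : ℝ => ‖y + τ • v‖ ^ p) volume 0 1 := by
    have hmeas : Measurable fun τ : ℝ => ‖y + τ • v‖ ^ p :=
      (by fun_prop : Continuous fun τ : ℝ => ‖y + τ • v‖).measurable.pow_const p
    refine hmajorant.mono_fun' hmeas.aestronglyMeasurable (ae_restrict_of_ae ?_)
    filter_upwards [Measure.ae_ne volume c] with τ hτ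
    rw [Real.norm_of_nonneg (by positivity)]
    exact hbound τ hτ
  calc ∫ τ in (0 : ℝ)..1, ‖y + τ • v‖ ^ p
      ≤ ∫ τ in (0 : ℝ)..1, ‖v‖ ^ p * |τ - c| ^ p :=
        integral_mono_ae zero_le_one hint hmajorant
          (by filter_upwards [Measure.ae_ne volume c] using hbound)
    _ = ‖v‖ ^ p * ∫ τ in (0 : ℝ)..1, |τ - c| ^ p := integral_const_mul _ _
    _ ≤ ‖v‖ ^ p * (2 / (p + 1)) := by
        gcongr
        exact integral_unitInterval_abs_sub_rpow_le hp hp0 c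
    _ = 2 / (p + 1) * ‖v‖ ^ p := mul_comm _ _

end InnerProductSpace

theorem stmt5_general (d : ℕ) (p : ℝ) (hp1 : -1 < p) (hp0 : p < 0)
    (x y : EuclideanSpace ℝ (Fin d)) (hxy : x ≠ y) :
    ∫ τ in (0:ℝ)..1, ‖τ • x + (1 - τ) • y‖ ^ p ≤ 2 / (p + 1) * ‖x - y‖ ^ p := by
  have hsegment : ∀ τ : ℝ, τ • x + (1 - τ) • y = y + τ • (x - y) := fun τ => by
    rw [smul_sub, sub_smul, one_smul]
    abel
  simp only [hsegment]
  exact integral_norm_add_smul_rpow_le hp1 hp0.le y (sub_ne_zero.2 hxy)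

theorem stmt5 (d : ℕ) (hd : 1 ≤ d) (p : ℝ) (hp1 : -1 < p) (hp0 : p < 0)
    (x y : EuclideanSpace ℝ (Fin d)) (hxy : x ≠ y) :
    ∫ τ in (0:ℝ)..1, ‖τ • x + (1 - τ) • y‖ ^ p ≤ 2 / (p + 1) * ‖x - y‖ ^ p :=
  stmt5_general d p hp1 hp0 x y hxy
end

section
/- For −1 < p < 0 and all x, y ∈ ℝ^d: | |x|^p x − |y|^p y | ≤ 2 |x − y|^{1+p}, where |z|^p z is interpreted as 0 when z = 0. -/
/-!
Write `a = ‖x‖`, `b = ‖y‖`, `q = 1 + p` and `u = ‖x - y‖²`. Since `2⟪x, y⟫ = a² + b² - u`, the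
square of the left-hand side is `(a^q)² + (b^q)² - a^p b^p (a² + b² - u)`, an affine function of
`u`, while the square of the right-hand side, `4 u^q`, is concave in `u`. As `u` ranges over
`[(a - b)², (a + b)²]`, it suffices to compare the two at the endpoints, where the claim reduces to
`|a^q - b^q| ≤ |a - b|^q` and `a^q + b^q ≤ 2 (a + b)^q`.
-/

open Real Set

namespace Real

theorem abs_rpow_sub_rpow_le {a b q : ℝ} (ha : 0 ≤ a) (hb : 0 ≤ b) (hq0 : 0 ≤ q) (hq1 : q ≤ 1) :
    |a ^ q - b ^ q| ≤ |a - b| ^ q := by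
  wlog hab : b ≤ a generalizing a b
  · rw [abs_sub_comm, abs_sub_comm a]
    exact this hb ha (le_of_not_ge hab)
  have hsub := rpow_add_le_add_rpow (sub_nonneg.2 hab) hb hq0 hq1
  rw [sub_add_cancel] at hsub
  rw [abs_of_nonneg (sub_nonneg.2 hab), abs_of_nonneg (sub_nonneg.2 (rpow_le_rpow hb hab hq0))]
  linarith

/-- `k` plays the role of `a^(q-1) b^(q-1)`; fixing it only through `hk` lets the cases `a = 0`
and `b = 0` go through with the rest. -/
theorem sq_rpow_add_sq_rpow_sub_mul_le {a b k u q : ℝ} (ha : 0 ≤ a) (hb : 0 ≤ b) (hq0 : 0 ≤ q)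
    (hq1 : q ≤ 1) (hk : k * (a * b) = a ^ q * b ^ q) (hu : u ∈ Icc ((a - b) ^ 2) ((a + b) ^ 2)) :
    (a ^ q) ^ 2 + (b ^ q) ^ 2 - k * (a ^ 2 + b ^ 2 - u) ≤ 4 * u ^ q := by
  have hconc : ConcaveOn ℝ (Ici 0) fun v : ℝ ↦ 4 * v ^ q + -k * v :=
    ((concaveOn_rpow hq0 hq1).smul (by norm_num : (0 : ℝ) ≤ 4)).add
      ((LinearMap.mul ℝ ℝ (-k)).concaveOn (convex_Ici 0))
  have hmin := hconc.min_le_of_mem_Icc (sq_nonneg (a - b)) (sq_nonneg (a + b)) hu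
  have hA : (a ^ q - b ^ q) ^ 2 ≤ 4 * ((a - b) ^ 2) ^ q := by
    calc (a ^ q - b ^ q) ^ 2 = |a ^ q - b ^ q| ^ 2 := (sq_abs _).symm
      _ ≤ (|a - b| ^ q) ^ 2 := by gcongr; exact abs_rpow_sub_rpow_le ha hb hq0 hq1
      _ = ((a - b) ^ 2) ^ q := by rw [rpow_pow_comm (abs_nonneg _), sq_abs]
      _ ≤ 4 * ((a - b) ^ 2) ^ q := by linarith [rpow_nonneg (sq_nonneg (a - b)) q]
  have hB : (a ^ q + b ^ q) ^ 2 ≤ 4 * ((a + b) ^ 2) ^ q := by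
    have hsum : a ^ q + b ^ q ≤ 2 * (a + b) ^ q := by
      linarith [rpow_le_rpow ha (le_add_of_nonneg_right hb) hq0,
        rpow_le_rpow hb (le_add_of_nonneg_left ha) hq0]
    calc (a ^ q + b ^ q) ^ 2 ≤ (2 * (a + b) ^ q) ^ 2 := by gcongr
      _ = 4 * ((a + b) ^ 2) ^ q := by rw [mul_pow, rpow_pow_comm (by positivity)]; norm_num
  have hleA : (a ^ q) ^ 2 + (b ^ q) ^ 2 - k * (a ^ 2 + b ^ 2) ≤
      4 * ((a - b) ^ 2) ^ q + -k * (a - b) ^ 2 := by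
    linear_combination hA - 2 * hk
  have hleB : (a ^ q) ^ 2 + (b ^ q) ^ 2 - k * (a ^ 2 + b ^ 2) ≤
      4 * ((a + b) ^ 2) ^ q + -k * (a + b) ^ 2 := by
    linear_combination hB + 2 * hk
  linarith [(le_min hleA hleB).trans hmin]

end Real

section InnerProductSpace

variable {E : Type*} [NormedAddCommGroup E] [InnerProductSpace ℝ E] {p : ℝ}

theorem norm_rpow_norm_smul_self (hp : 1 + p ≠ 0) (x : E) : ‖(‖x‖ ^ p) • x‖ = ‖x‖ ^ (1 + p) := by
  rw [norm_smul, norm_of_nonneg (rpow_nonneg (norm_nonneg x) p), add_comm,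
    rpow_add_one' (norm_nonneg x) (by rwa [add_comm])]

theorem norm_rpow_norm_smul_sub_sq (hp : 1 + p ≠ 0) (x y : E) :
    ‖(‖x‖ ^ p) • x - (‖y‖ ^ p) • y‖ ^ 2 = (‖x‖ ^ (1 + p)) ^ 2 + (‖y‖ ^ (1 + p)) ^ 2
      - ‖x‖ ^ p * ‖y‖ ^ p * (‖x‖ ^ 2 + ‖y‖ ^ 2 - ‖x - y‖ ^ 2) := by
  rw [norm_sub_sq_real, norm_sub_sq_real, norm_rpow_norm_smul_self hp,
    norm_rpow_norm_smul_self hp, real_inner_smul_left, real_inner_smul_right]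
  ring

theorem norm_rpow_norm_smul_sub_le (hp1 : -1 < p) (hp0 : p ≤ 0) (x y : E) :
    ‖(‖x‖ ^ p) • x - (‖y‖ ^ p) • y‖ ≤ 2 * ‖x - y‖ ^ (1 + p) := by
  have hq : 1 + p ≠ 0 := by linarith
  have hk : ‖x‖ ^ p * ‖y‖ ^ p * (‖x‖ * ‖y‖) = ‖x‖ ^ (1 + p) * ‖y‖ ^ (1 + p) := by
    rw [add_comm, rpow_add_one' (norm_nonneg x) (by linarith),
      rpow_add_one' (norm_nonneg y) (by linarith)]
    ring
  have hu : ‖x - y‖ ^ 2 ∈ Icc ((‖x‖ - ‖y‖) ^ 2) ((‖x‖ + ‖y‖) ^ 2) :=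
    ⟨sq_le_sq.2 (by simpa only [abs_norm] using abs_norm_sub_norm_le x y),
      pow_le_pow_left₀ (norm_nonneg _) (norm_sub_le x y) 2⟩
  rw [← pow_le_pow_iff_left₀ (norm_nonneg _) (by positivity) two_ne_zero,
    norm_rpow_norm_smul_sub_sq hq, mul_pow, rpow_pow_comm (norm_nonneg (x - y)),
    show (2 : ℝ) ^ 2 = 4 by norm_num]
  exact sq_rpow_add_sq_rpow_sub_mul_le (norm_nonneg x) (norm_nonneg y) (by linarith) (by linarith)
    hk hu

end InnerProductSpace

theorem stmt6_general (d : ℕ) (p : ℝ) (hp1 : -1 < p) (hp0 : p < 0)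
    (x y : EuclideanSpace ℝ (Fin d)) :
    ‖(‖x‖ ^ p) • x - (‖y‖ ^ p) • y‖ ≤ 2 * ‖x - y‖ ^ (1 + p) :=
  norm_rpow_norm_smul_sub_le hp1 hp0.le x y

theorem stmt6 (d : ℕ) (hd : 1 ≤ d) (p : ℝ) (hp1 : -1 < p) (hp0 : p < 0)
    (x y : EuclideanSpace ℝ (Fin d)) :
    ‖(‖x‖ ^ p) • x - (‖y‖ ^ p) • y‖ ≤ 2 * ‖x - y‖ ^ (1 + p) :=
  stmt6_general d p hp1 hp0 x y
end

section
/- For any β > 0 and vectors x, y ∈ ℝ^d with x ≠ y, the segment integral satisfies ∫₀¹ |τx + (1−τ)y|^β dτ ≥ |x − y|^β / (2^{β+1} (β+1)). -/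
/-!
The chord from `γ (1 - τ)` to `γ τ`, where `γ τ = τ • x + (1 - τ) • y`, is `(2τ - 1) • (x - y)`,
so by the triangle inequality one of its endpoints has norm at least `(τ - 1/2) ‖x - y‖`.
Folding `[0, 1]` at `1/2` pairs these two points, and integrating `(τ - 1/2) ^ β` over `[1/2, 1]`
gives the constant.
-/

open intervalIntegral

lemma Real.max_rpow_le_rpow_add_rpow {a b : ℝ} (ha : 0 ≤ a) (hb : 0 ≤ b) (β : ℝ) :
    max a b ^ β ≤ a ^ β + b ^ β := by
  rcases max_choice a b with h | h <;> rw [h]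
  · linarith [Real.rpow_nonneg hb β]
  · linarith [Real.rpow_nonneg ha β]

lemma norm_sub_le_two_mul_max {E : Type*} [SeminormedAddCommGroup E] (a b : E) :
    ‖a - b‖ ≤ 2 * max ‖a‖ ‖b‖ := by
  linarith [norm_sub_le a b, le_max_left ‖a‖ ‖b‖, le_max_right ‖a‖ ‖b‖]

lemma integral_zero_one_eq_integral_add_comp_one_sub {f : ℝ → ℝ}
    (hf : IntervalIntegrable f MeasureTheory.volume 0 1) :
    ∫ τ in (0:ℝ)..1, f τ = ∫ τ in (1/2:ℝ)..1, (f τ + f (1 - τ)) := by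
  have hsub₁ : Set.uIcc (0:ℝ) (1/2) ⊆ Set.uIcc 0 1 :=
    Set.uIcc_subset_uIcc (by simp) (by norm_num [Set.mem_uIcc])
  have hsub₂ : Set.uIcc (1/2:ℝ) 1 ⊆ Set.uIcc 0 1 :=
    Set.uIcc_subset_uIcc (by norm_num [Set.mem_uIcc]) (by simp)
  have hreflect_int : IntervalIntegrable (fun τ => f (1 - τ)) MeasureTheory.volume (1/2) 1 :=
    (hf.comp_sub_left 1).symm.mono_set (by simpa using hsub₂)
  have hreflect : ∫ τ in (1/2:ℝ)..1, f (1 - τ) = ∫ τ in (0:ℝ)..(1/2), f τ := by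
    rw [integral_comp_sub_left]; norm_num
  rw [integral_add (hf.mono_set hsub₂) hreflect_int, hreflect, add_comm,
    integral_add_adjacent_intervals (hf.mono_set hsub₁) (hf.mono_set hsub₂)]

lemma integral_sub_half_rpow {β : ℝ} (hβ : 0 ≤ β) :
    ∫ τ in (1/2:ℝ)..1, (τ - 1/2) ^ β = 1 / (2 ^ (β + 1) * (β + 1)) := by
  rw [integral_comp_sub_right (· ^ β), integral_rpow (Or.inl (by linarith))]
  norm_num [Real.zero_rpow (by linarith : β + 1 ≠ 0)]
  rw [Real.div_rpow zero_le_one zero_le_two, Real.one_rpow]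
  ring

theorem norm_sub_rpow_div_le_integral_norm_segment_rpow {E : Type*}
    [SeminormedAddCommGroup E] [NormedSpace ℝ E] (x y : E) {β : ℝ} (hβ : 0 ≤ β) :
    ‖x - y‖ ^ β / (2 ^ (β + 1) * (β + 1)) ≤
      ∫ τ in (0:ℝ)..1, ‖τ • x + (1 - τ) • y‖ ^ β := by
  set γ : ℝ → E := fun τ => τ • x + (1 - τ) • y
  have hcont : Continuous fun τ => ‖γ τ‖ ^ β :=
    Continuous.rpow_const (by fun_prop) fun _ => Or.inr hβ
  have hpair : ∀ τ ∈ Set.Icc (1/2:ℝ) 1,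
      ‖x - y‖ ^ β * (τ - 1/2) ^ β ≤ ‖γ τ‖ ^ β + ‖γ (1 - τ)‖ ^ β := by
    rintro τ ⟨hτ, -⟩
    have hchord : γ τ - γ (1 - τ) = (2 * (τ - 1/2)) • (x - y) := by simp only [γ]; module
    have hmax : (τ - 1/2) * ‖x - y‖ ≤ max ‖γ τ‖ ‖γ (1 - τ)‖ := by
      have := norm_sub_le_two_mul_max (γ τ) (γ (1 - τ))
      rw [hchord, norm_smul, Real.norm_of_nonneg (by linarith)] at this
      linarith
    calc ‖x - y‖ ^ β * (τ - 1/2) ^ β = ((τ - 1/2) * ‖x - y‖) ^ β := by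
          rw [Real.mul_rpow (by linarith) (norm_nonneg _), mul_comm]
      _ ≤ max ‖γ τ‖ ‖γ (1 - τ)‖ ^ β :=
          Real.rpow_le_rpow (mul_nonneg (by linarith) (norm_nonneg _)) hmax hβ
      _ ≤ ‖γ τ‖ ^ β + ‖γ (1 - τ)‖ ^ β :=
          Real.max_rpow_le_rpow_add_rpow (norm_nonneg _) (norm_nonneg _) β
  calc ‖x - y‖ ^ β / (2 ^ (β + 1) * (β + 1))
      = ∫ τ in (1/2:ℝ)..1, ‖x - y‖ ^ β * (τ - 1/2) ^ β := by
        rw [integral_const_mul, integral_sub_half_rpow hβ, mul_one_div]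
    _ ≤ ∫ τ in (1/2:ℝ)..1, (‖γ τ‖ ^ β + ‖γ (1 - τ)‖ ^ β) :=
        integral_mono_on (by norm_num)
          ((continuous_const.mul
            (Continuous.rpow_const (by fun_prop) fun _ => Or.inr hβ)).intervalIntegrable _ _)
          ((hcont.add (hcont.comp (by fun_prop))).intervalIntegrable _ _) hpair
    _ = ∫ τ in (0:ℝ)..1, ‖γ τ‖ ^ β :=
        (integral_zero_one_eq_integral_add_comp_one_sub (hcont.intervalIntegrable 0 1)).symm

theorem stmt8_general (d : ℕ) (β : ℝ) (hβ : 0 < β)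
    (x y : EuclideanSpace ℝ (Fin d)) :
    ‖x - y‖ ^ β / (2 ^ (β + 1) * (β + 1)) ≤
      ∫ τ in (0:ℝ)..1, ‖τ • x + (1 - τ) • y‖ ^ β :=
  norm_sub_rpow_div_le_integral_norm_segment_rpow x y hβ.le

theorem stmt8 (d : ℕ) (hd : 1 ≤ d) (β : ℝ) (hβ : 0 < β)
    (x y : EuclideanSpace ℝ (Fin d)) (hxy : x ≠ y) :
    ‖x - y‖ ^ β / (2 ^ (β + 1) * (β + 1)) ≤
      ∫ τ in (0:ℝ)..1, ‖τ • x + (1 - τ) • y‖ ^ β :=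
  stmt8_general d β hβ x y
end

section
/- Let F(z) = a₋₁ z^{−α} + a₀ + Σ_{i=1}^N a_i z^{α_i} with α ∈ (0,1), 0 < α₁ < ⋯ < α_N, coefficients a₋₁, a₀, a_N ≥ a_* > 0 and a_i ≥ 0, and set s = α_N + 2. Then for all x, y ∈ ℝ^d: (F(|x|)x − F(|y|)y) · (x − y) ≥ C₃ |x − y|^s, where C₃ = a_*(1−α)/(2^{s−1}(s−1)). -/
/-!
Every power map `z ↦ ‖z‖ ^ β • z` with `β > -1` is monotone, and for `β ≥ 0` it is coercive of
order `β + 2`: writing `2⟪a • x - b • y, x - y⟫ = (a + b)‖x - y‖² + (a - b)(‖x‖² - ‖y‖²)`, the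
second term is nonnegative and `‖x‖ ^ β + ‖y‖ ^ β ≥ (‖x - y‖ / 2) ^ β`. The map `z ↦ F(‖z‖) • z` is
a nonnegative combination of such power maps, so it is at least as coercive as its top-order term
`a_N ‖z‖ ^ α_N • z`.
-/

open scoped RealInnerProductSpace

lemma rpow_sub_rpow_mul_sub_nonneg {p q γ : ℝ} (hp : 0 ≤ p) (hq : 0 ≤ q) (hγ : 0 ≤ γ) :
    0 ≤ (p ^ γ - q ^ γ) * (p - q) := by
  rcases le_total p q with h | h
  · exact mul_nonneg_of_nonpos_of_nonpos
      (sub_nonpos.2 (Real.rpow_le_rpow hp h hγ)) (sub_nonpos.2 h)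
  · exact mul_nonneg (sub_nonneg.2 (Real.rpow_le_rpow hq h hγ)) (sub_nonneg.2 h)

section PowerMaps

variable {E : Type*} [NormedAddCommGroup E] [InnerProductSpace ℝ E]

lemma inner_smul_sub_smul_sub (a b : ℝ) (x y : E) :
    ⟪a • x - b • y, x - y⟫ = a * ‖x‖ ^ 2 + b * ‖y‖ ^ 2 - (a + b) * ⟪x, y⟫ := by
  simp only [inner_sub_left, inner_sub_right, real_inner_smul_left, real_inner_self_eq_norm_sq,
    real_inner_comm x y]
  ring

lemma two_mul_inner_smul_sub_smul_sub (a b : ℝ) (x y : E) :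
    2 * ⟪a • x - b • y, x - y⟫ =
      (a + b) * ‖x - y‖ ^ 2 + (a - b) * (‖x‖ ^ 2 - ‖y‖ ^ 2) := by
  rw [inner_smul_sub_smul_sub, norm_sub_sq_real]
  ring

lemma mul_norm_sub_mul_norm_mul_le_inner {a b : ℝ} (ha : 0 ≤ a) (hb : 0 ≤ b) (x y : E) :
    (a * ‖x‖ - b * ‖y‖) * (‖x‖ - ‖y‖) ≤ ⟪a • x - b • y, x - y⟫ := by
  have hxy := mul_le_mul_of_nonneg_left (real_inner_le_norm x y) (add_nonneg ha hb)
  rw [inner_smul_sub_smul_sub]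
  linarith

lemma inner_rpow_norm_smul_sub_nonneg {β : ℝ} (hβ : -1 < β) (x y : E) :
    0 ≤ ⟪‖x‖ ^ β • x - ‖y‖ ^ β • y, x - y⟫ := by
  have hβ1 : β + 1 ≠ 0 := by linarith
  refine le_trans ?_ (mul_norm_sub_mul_norm_mul_le_inner (by positivity) (by positivity) x y)
  rw [← Real.rpow_add_one' (norm_nonneg x) hβ1, ← Real.rpow_add_one' (norm_nonneg y) hβ1]
  exact rpow_sub_rpow_mul_sub_nonneg (norm_nonneg x) (norm_nonneg y) (by linarith)

lemma two_rpow_mul_norm_sub_rpow_le_inner {β : ℝ} (hβ : 0 ≤ β) (x y : E) :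
    2 ^ (-(β + 1)) * ‖x - y‖ ^ (β + 2) ≤ ⟪‖x‖ ^ β • x - ‖y‖ ^ β • y, x - y⟫ := by
  have hx := norm_nonneg x
  have hy := norm_nonneg y
  have hxy := norm_nonneg (x - y)
  have h_sum : (‖x - y‖ / 2) ^ β ≤ ‖x‖ ^ β + ‖y‖ ^ β := by
    have h_tri : ‖x - y‖ ≤ ‖x‖ + ‖y‖ := norm_sub_le x y
    have hx' := Real.rpow_nonneg hx β
    have hy' := Real.rpow_nonneg hy β
    rcases le_total ‖x‖ ‖y‖ with h | h
    · linarith [Real.rpow_le_rpow (by positivity) (by linarith : ‖x - y‖ / 2 ≤ ‖y‖) hβ]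
    · linarith [Real.rpow_le_rpow (by positivity) (by linarith : ‖x - y‖ / 2 ≤ ‖x‖) hβ]
  have h_cross : 0 ≤ (‖x‖ ^ β - ‖y‖ ^ β) * (‖x‖ ^ 2 - ‖y‖ ^ 2) := by
    rw [show ‖x‖ ^ 2 - ‖y‖ ^ 2 = (‖x‖ - ‖y‖) * (‖x‖ + ‖y‖) by ring, ← mul_assoc]
    exact mul_nonneg (rpow_sub_rpow_mul_sub_nonneg hx hy hβ) (by positivity)
  have h_const : 2 ^ (-(β + 1)) * ‖x - y‖ ^ (β + 2) = (‖x - y‖ / 2) ^ β * ‖x - y‖ ^ 2 / 2 := by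
    rw [Real.div_rpow hxy zero_le_two, Real.rpow_add' hxy (by positivity), Real.rpow_two,
      Real.rpow_neg zero_le_two, Real.rpow_add_one two_ne_zero]
    field_simp
  have h_two := two_mul_inner_smul_sub_smul_sub (‖x‖ ^ β) (‖y‖ ^ β) x y
  nlinarith [mul_le_mul_of_nonneg_right h_sum (sq_nonneg ‖x - y‖)]

lemma inner_generalizedPolynomial_smul_sub {ι : Type*} [Fintype ι] {α am1 a0 : ℝ}
    {a e : ι → ℝ} {F : ℝ → ℝ}
    (hF : F = fun w => am1 * w ^ (-α) + a0 + ∑ i, a i * w ^ (e i)) (x y : E) :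
    ⟪F ‖x‖ • x - F ‖y‖ • y, x - y⟫ =
      am1 * ⟪‖x‖ ^ (-α) • x - ‖y‖ ^ (-α) • y, x - y⟫ + a0 * ‖x - y‖ ^ 2 +
        ∑ i, a i * ⟪‖x‖ ^ (e i) • x - ‖y‖ ^ (e i) • y, x - y⟫ := by
  have h_smul (c d : ℝ) : ⟪c • x - d • y, x - y⟫ = c * ⟪x, x - y⟫ - d * ⟪y, x - y⟫ := by
    rw [inner_sub_left, real_inner_smul_left, real_inner_smul_left]
  simp only [hF, h_smul, ← real_inner_self_eq_norm_sq, inner_sub_left (x := x), add_mul,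
    Finset.sum_mul, mul_sub, Finset.sum_sub_distrib, mul_assoc]
  ring

end PowerMaps

lemma div_two_rpow_mul_le_two_rpow_neg {r t : ℝ} (ht : 0 < t) (hr : r ≤ t) :
    r / (2 ^ t * t) ≤ 2 ^ (-t) := by
  calc r / (2 ^ t * t) ≤ t / (2 ^ t * t) := div_le_div_of_nonneg_right hr (by positivity)
    _ = 2 ^ (-t) := by rw [Real.rpow_neg zero_le_two]; field_simp

theorem stmt9 (d : ℕ) (N : ℕ) (hN : 1 ≤ N)
    (α : ℝ) (hα0 : 0 < α) (hα1 : α < 1)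
    (e : Fin N → ℝ) (hepos : ∀ i, 0 < e i)
    (astar : ℝ) (hstar : 0 < astar)
    (am1 a0 : ℝ) (a : Fin N → ℝ)
    (ham1 : astar ≤ am1) (ha0 : astar ≤ a0)
    (haN : astar ≤ a ⟨N - 1, by omega⟩) (ha : ∀ i, 0 ≤ a i)
    (F : ℝ → ℝ)
    (hF : F = fun w => am1 * w ^ (-α) + a0 + ∑ i, a i * w ^ (e i))
    (s : ℝ) (hs : s = e ⟨N - 1, by omega⟩ + 2) :
    ∀ x y : EuclideanSpace ℝ (Fin d),
      ⟪F ‖x‖ • x - F ‖y‖ • y, x - y⟫ ≥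
        astar * (1 - α) / (2 ^ (s - 1) * (s - 1)) * ‖x - y‖ ^ s := by
  intro x y
  set j : Fin N := ⟨N - 1, by omega⟩
  set gap : ℝ → ℝ := fun β => ⟪‖x‖ ^ β • x - ‖y‖ ^ β • y, x - y⟫
  have hs1 : 0 < s - 1 := by linarith [hepos j]
  have h_neg : 0 ≤ am1 * gap (-α) :=
    mul_nonneg (by linarith) (inner_rpow_norm_smul_sub_nonneg (by linarith) x y)
  have h_zero : 0 ≤ a0 * ‖x - y‖ ^ 2 := mul_nonneg (by linarith) (sq_nonneg _)
  have h_top : a j * gap (e j) ≤ ∑ i, a i * gap (e i) :=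
    Finset.single_le_sum (fun i _ => mul_nonneg (ha i)
      (inner_rpow_norm_smul_sub_nonneg (by linarith [hepos i]) x y)) (Finset.mem_univ j)
  have h_coercive : 2 ^ (-(s - 1)) * ‖x - y‖ ^ s ≤ gap (e j) := by
    rw [hs, show e j + 2 - 1 = e j + 1 by ring]
    exact two_rpow_mul_norm_sub_rpow_le_inner (hepos j).le x y
  have h_const : (1 - α) / (2 ^ (s - 1) * (s - 1)) ≤ 2 ^ (-(s - 1)) :=
    div_two_rpow_mul_le_two_rpow_neg hs1 (by linarith [hepos j])
  have hk : 0 ≤ (1 - α) / (2 ^ (s - 1) * (s - 1)) := div_nonneg (by linarith) (by positivity)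
  have hms : 0 ≤ ‖x - y‖ ^ s := by positivity
  rw [ge_iff_le, inner_generalizedPolynomial_smul_sub hF, mul_div_assoc]
  calc astar * ((1 - α) / (2 ^ (s - 1) * (s - 1))) * ‖x - y‖ ^ s
      ≤ a j * ((1 - α) / (2 ^ (s - 1) * (s - 1))) * ‖x - y‖ ^ s := by gcongr
    _ ≤ a j * (2 ^ (-(s - 1)) * ‖x - y‖ ^ s) := by
        rw [mul_assoc]; gcongr; exact ha j
    _ ≤ a j * gap (e j) := by gcongr; exact ha j
    _ ≤ _ := by linarith
end

section
/- (Discrete Gronwall, backward difference form.) Let {a_n}, {b_n}, {g_n} be nonnegative sequences satisfying (a_n − a_{n−1})/Δt − a_n + b_n ≤ g_n for all n ≥ 1, where 0 < Δt < 1. Then a_n + Δt Σ_{i=1}^n b_i ≤ e^{nΔt/(1−Δt)} ( a₀ + Δt Σ_{i=1}^n g_i ) for all n ≥ 1. -/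
/-!
Multiplying the difference inequality by `Δt` gives `(1 - Δt) a_n + Δt b_n ≤ a_{n-1} + Δt g_n`, so the
quantity `S_n = a_n + Δt ∑_{i ≤ n} b_i` satisfies `S_n ≤ (1 - Δt)⁻¹ (S_{n-1} + Δt g_n)`.
Iterating this one-step bound produces the factor `(1 - Δt)⁻ⁿ`, and
`(1 - Δt)⁻¹ = 1 + Δt / (1 - Δt) ≤ exp (Δt / (1 - Δt))`.
-/

open Finset

theorem le_pow_mul_add_sum_of_le_mul_add {R : Type*} [Semiring R] [PartialOrder R]
    [IsOrderedRing R] {x d : ℕ → R} {c : R} (hc : 1 ≤ c) (hd : ∀ n, 0 ≤ d n)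
    (h : ∀ n, x (n + 1) ≤ c * (x n + d (n + 1))) (n : ℕ) :
    x n ≤ c ^ n * (x 0 + ∑ i ∈ Icc 1 n, d i) := by
  induction n with
  | zero => simp
  | succ n ih =>
    have hc0 : 0 ≤ c := zero_le_one.trans hc
    calc x (n + 1) ≤ c * (c ^ n * (x 0 + ∑ i ∈ Icc 1 n, d i) + d (n + 1)) :=
          (h n).trans (mul_le_mul_of_nonneg_left (add_le_add_left ih _) hc0)
      _ = c ^ (n + 1) * (x 0 + ∑ i ∈ Icc 1 n, d i) + c * d (n + 1) := by
          rw [mul_add, pow_succ', mul_assoc]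
      _ ≤ c ^ (n + 1) * (x 0 + ∑ i ∈ Icc 1 n, d i) + c ^ (n + 1) * d (n + 1) :=
          add_le_add_right (mul_le_mul_of_nonneg_right (le_self_pow₀ hc n.succ_ne_zero) (hd _)) _
      _ = c ^ (n + 1) * (x 0 + ∑ i ∈ Icc 1 (n + 1), d i) := by
          simp only [sum_Icc_succ_top (by omega : 1 ≤ n + 1), mul_add, add_assoc]

theorem Real.inv_one_sub_le_exp_div {x : ℝ} (hx : x < 1) : (1 - x)⁻¹ ≤ Real.exp (x / (1 - x)) := by
  have h : 0 < 1 - x := by linarith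
  calc (1 - x)⁻¹ = x / (1 - x) + 1 := by field_simp; ring
    _ ≤ Real.exp (x / (1 - x)) := Real.add_one_le_exp _

theorem backward_euler_step {Δt : ℝ} (hΔ0 : 0 < Δt) (hΔ1 : Δt < 1) {a b g : ℕ → ℝ}
    (hb : ∀ n, 0 ≤ b n) {n : ℕ} (hrec : (a (n + 1) - a n) / Δt - a (n + 1) + b (n + 1) ≤ g (n + 1)) :
    a (n + 1) + Δt * ∑ i ∈ Icc 1 (n + 1), b i ≤
      (1 - Δt)⁻¹ * (a n + Δt * ∑ i ∈ Icc 1 n, b i + Δt * g (n + 1)) := by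
  have hΔ : 0 < 1 - Δt := by linarith
  have hcleared : a (n + 1) - a n ≤ (g (n + 1) + a (n + 1) - b (n + 1)) * Δt :=
    (div_le_iff₀ hΔ0).1 (by linarith)
  have hsum : 0 ≤ ∑ i ∈ Icc 1 (n + 1), b i := sum_nonneg fun i _ ↦ hb i
  rw [le_inv_mul_iff₀ hΔ, sum_Icc_succ_top (by omega)]
  rw [sum_Icc_succ_top (by omega)] at hsum
  nlinarith [mul_nonneg (sq_nonneg Δt) hsum]

theorem stmt14 (Δt : ℝ) (hΔ0 : 0 < Δt) (hΔ1 : Δt < 1)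
    (a b g : ℕ → ℝ)
    (ha : ∀ n, 0 ≤ a n) (hb : ∀ n, 0 ≤ b n) (hg : ∀ n, 0 ≤ g n)
    (hrec : ∀ n, 1 ≤ n → (a n - a (n - 1)) / Δt - a n + b n ≤ g n) :
    ∀ n, 1 ≤ n →
      a n + Δt * ∑ i ∈ Finset.Icc 1 n, b i ≤
        Real.exp ((n : ℝ) * Δt / (1 - Δt)) * (a 0 + Δt * ∑ i ∈ Finset.Icc 1 n, g i) := by
  intro n _
  have hc : 1 ≤ (1 - Δt)⁻¹ := (one_le_inv₀ (by linarith)).2 (by linarith)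
  have hpow : (1 - Δt)⁻¹ ^ n ≤ Real.exp ((n : ℝ) * Δt / (1 - Δt)) := by
    rw [mul_div_assoc, Real.exp_nat_mul]
    exact pow_le_pow_left₀ (zero_le_one.trans hc) (Real.inv_one_sub_le_exp_div hΔ1) n
  have hG : 0 ≤ a 0 + Δt * ∑ i ∈ Icc 1 n, g i :=
    add_nonneg (ha 0) (mul_nonneg hΔ0.le (sum_nonneg fun i _ ↦ hg i))
  calc a n + Δt * ∑ i ∈ Icc 1 n, b i
      ≤ (1 - Δt)⁻¹ ^ n * (a 0 + Δt * ∑ i ∈ Icc 1 0, b i + ∑ i ∈ Icc 1 n, Δt * g i) :=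
        le_pow_mul_add_sum_of_le_mul_add (x := fun n ↦ a n + Δt * ∑ i ∈ Icc 1 n, b i) hc
          (fun i ↦ mul_nonneg hΔ0.le (hg i))
          (fun k ↦ backward_euler_step hΔ0 hΔ1 hb (hrec (k + 1) (by omega))) n
    _ = (1 - Δt)⁻¹ ^ n * (a 0 + Δt * ∑ i ∈ Icc 1 n, g i) := by simp [mul_sum]
    _ ≤ Real.exp ((n : ℝ) * Δt / (1 - Δt)) * (a 0 + Δt * ∑ i ∈ Icc 1 n, g i) :=
        mul_le_mul_of_nonneg_right hpow hG
end
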